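/- In the decentralized finite-sum setting with the D-GET algorithm, for every iteration r with (n_r − 1)q ≤ r ≤ n_r q − 1 (where n_r = ⌊r/q⌋ + 1), the local gradient-estimation error satisfies E‖v^r − G(x^r)‖² ≤ (L²/|S₂|)∑_{t=(n_r−1)q}^{r} E‖x^{t+1} − x^t‖² + E‖v^{(n_r−1)q} − G(x^{(n_r−1)q})‖². -/

import Mathlib

open Finset MeasureTheory ProbabilityTheory

noncomputable section

/-- Euclidean space `ℝ^d`. -/
abbrev Vec (d : ℕ) := EuclideanSpace ℝ (Fin d)

/-- Stacked space `(ℝ^d)^m` with the Euclidean (ℓ²) norm. -/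
abbrev Stack (m d : ℕ) := PiLp 2 (fun _ : Fin m => Vec d)

/-- Blockwise action of an `m × m` matrix on `(ℝ^d)^m`. -/
def Wact {m d : ℕ} (W : Matrix (Fin m) (Fin m) ℝ) (x : Stack m d) : Stack m d :=
  WithLp.toLp 2 (fun i => ∑ k, W i k • x k)

/-- Matrix-vector product, valued in Euclidean space. -/
def mulVecE {m : ℕ} (W : Matrix (Fin m) (Fin m) ℝ) (u : Vec m) : Vec m :=
  WithLp.toLp 2 (fun i => ∑ k, W i k * u k)

/-- Block average `x̄ = (1/m) ∑ᵢ xᵢ`. -/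
def blockAvg {m d : ℕ} (x : Stack m d) : Vec d := (m : ℝ)⁻¹ • ∑ i, x i

/-- The stacked vector `𝟙 u` all of whose `m` blocks equal `u`. -/
def oneVec {m d : ℕ} (u : Vec d) : Stack m d := WithLp.toLp 2 (fun _ => u)

/-- Local cost of node `i` in the finite-sum setting: `fᶦ = (1/n) ∑ⱼ fᶦⱼ`. -/
def fLoc {m d n : ℕ} (f : Fin m → Fin n → Vec d → ℝ) (i : Fin m) : Vec d → ℝ :=
  fun w => (n : ℝ)⁻¹ * ∑ j, f i j w

/-- Global cost `f = (1/m) ∑ᵢ fᶦ`. -/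
def fTot {m d n : ℕ} (f : Fin m → Fin n → Vec d → ℝ) : Vec d → ℝ :=
  fun w => (m : ℝ)⁻¹ * ∑ i, fLoc f i w

/-- Stacked gradient `G(x) = (∇f¹(x₁),…,∇fᵐ(x_m))`. -/
def Gmap {m d n : ℕ} (f : Fin m → Fin n → Vec d → ℝ) (x : Stack m d) : Stack m d :=
  WithLp.toLp 2 (fun i => gradient (fLoc f i) (x i))

/-- Network-average gradient `(1/m) ∑ᵢ ∇fᶦ(xᵢ)`. -/
def avgGrad {m d n : ℕ} (f : Fin m → Fin n → Vec d → ℝ) (x : Stack m d) : Vec d :=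
  (m : ℝ)⁻¹ • ∑ i, gradient (fLoc f i) (x i)

/-!
The SARAH-type estimator is unbiased for the gradient *increment*: given the past, node `i`'s
new error is the old error `vᵢ − ∇fᶦ(x'ᵢ)` plus the mean of `|S₂|` i.i.d. uniform draws of the
centred increments `∇fᶦⱼ(xᵢ) − ∇fᶦⱼ(x'ᵢ) − (∇fᶦ(xᵢ) − ∇fᶦ(x'ᵢ))`. The cross terms vanish, so the
mean square error grows by at most `(1/|S₂|)·𝔼ⱼ‖∇fᶦⱼ(xᵢ) − ∇fᶦⱼ(x'ᵢ)‖² ≤ (L²/|S₂|)‖xᵢ − x'ᵢ‖²`.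
Since the iterates up to time `r` are functions of the samples drawn up to time `r`, which are
independent of the fresh batch at time `r + 1`, this one-step bound holds in expectation, and
summing it over the current inner loop (no full gradient is computed there) gives the claim.
-/

open scoped BigOperators ENNReal RealInnerProductSpace

section FunctionSpaceExpect

variable {κ β M : Type*} [Fintype κ] [Fintype β] [AddCommMonoid M] [Module ℚ≥0 M]

theorem expect_sum_arrow {κ' : Type*} [Fintype κ'] [DecidableEq κ] [DecidableEq κ']
    (F : (κ → β) → (κ' → β) → M) :
    𝔼 p : κ ⊕ κ' → β, F (p ∘ Sum.inl) (p ∘ Sum.inr) = 𝔼 p₁, 𝔼 p₂, F p₁ p₂ := by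
  refine (Fintype.expect_equiv (Equiv.sumArrowEquivProdArrow κ κ' β) _ (fun z => F z.1 z.2)
    fun _ => rfl).trans ?_
  rw [← Finset.expect_product', Finset.univ_product_univ]

variable [DecidableEq κ] [Nonempty β]

theorem expect_comp_eval (k : κ) (F : β → M) : 𝔼 h : κ → β, F (h k) = 𝔼 y, F y := by
  refine (Fintype.expect_equiv (Equiv.funSplitAt k β) _ (fun z => F z.1) fun _ => rfl).trans ?_
  rw [← Finset.univ_product_univ, Finset.expect_product' univ univ (fun y _ => F y)]
  simp only [Fintype.expect_const]

theorem expect_comp_eval_eval {k₁ k₂ : κ} (hk : k₁ ≠ k₂) (F : β → β → M) :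
    𝔼 h : κ → β, F (h k₁) (h k₂) = 𝔼 y₁, 𝔼 y₂, F y₁ y₂ := by
  refine (Fintype.expect_equiv (Equiv.funSplitAt k₁ β) _
    (fun z => F z.1 (z.2 ⟨k₂, hk.symm⟩)) fun _ => rfl).trans ?_
  rw [← Finset.univ_product_univ]
  exact (Finset.expect_product' univ univ
    fun y (g : {j // j ≠ k₁} → β) => F y (g ⟨k₂, hk.symm⟩)).trans (by simp only [expect_comp_eval])

theorem expect_comp_slice {σ : Type*} [Fintype σ] [DecidableEq σ] (k : κ) (F : (σ → β) → M) :
    𝔼 c : σ × κ → β, F (fun b => c (b, k)) = 𝔼 s : σ → β, F s :=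
  (Fintype.expect_equiv ((Equiv.arrowCongr (Equiv.prodComm σ κ) (Equiv.refl β)).trans
    (Equiv.curry κ σ β)) _ (fun h => F (h k)) fun _ => rfl).trans (expect_comp_eval k F)

end FunctionSpaceExpect

section SampleMean

variable {σ ι E : Type*} [Fintype σ] [DecidableEq σ] [Fintype ι]
  [NormedAddCommGroup E] [InnerProductSpace ℝ E] {ζ : ι → E}

theorem expect_inner_left_eq_zero (hζ : ∑ j, ζ j = 0) (w : E) : 𝔼 j, ⟪ζ j, w⟫ = 0 := by
  rw [Fintype.expect_eq_sum_div_card, ← sum_inner, hζ, inner_zero_left, zero_div]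

variable [Nonempty ι]

theorem expect_norm_sq_sum_comp (hζ : ∑ j, ζ j = 0) :
    𝔼 s : σ → ι, ‖∑ b, ζ (s b)‖ ^ 2 = Fintype.card σ * 𝔼 j, ‖ζ j‖ ^ 2 := by
  have hpair : ∀ b b', 𝔼 s : σ → ι, ⟪ζ (s b), ζ (s b')⟫
      = if b = b' then 𝔼 j, ‖ζ j‖ ^ 2 else 0 := by
    intro b b'
    split_ifs with hb
    · subst hb
      simp only [real_inner_self_eq_norm_sq]
      exact expect_comp_eval b fun y => ‖ζ y‖ ^ 2
    · rw [expect_comp_eval_eval hb (fun y y' => ⟪ζ y, ζ y'⟫), Finset.expect_comm]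
      simp_rw [expect_inner_left_eq_zero hζ, Finset.expect_const_zero]
  simp_rw [← real_inner_self_eq_norm_sq (∑ b, _), sum_inner, inner_sum, Finset.expect_sum_comm,
    hpair, Finset.sum_ite_eq, Finset.mem_univ, if_true, Finset.sum_const, Finset.card_univ,
    nsmul_eq_mul]

theorem expect_norm_smul_sum_comp_add_sq (hζ : ∑ j, ζ j = 0) (e : E) :
    𝔼 s : σ → ι, ‖(Fintype.card σ : ℝ)⁻¹ • ∑ b, ζ (s b) + e‖ ^ 2
      = (Fintype.card σ : ℝ)⁻¹ * 𝔼 j, ‖ζ j‖ ^ 2 + ‖e‖ ^ 2 := by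
  set c : ℝ := (Fintype.card σ : ℝ)⁻¹
  have hcross : 𝔼 s : σ → ι, ⟪∑ b, ζ (s b), e⟫ = 0 := by
    simp_rw [sum_inner, Finset.expect_sum_comm, expect_comp_eval _ (fun y => ⟪ζ y, e⟫),
      expect_inner_left_eq_zero hζ, Finset.sum_const_zero]
  have hexpand : ∀ s : σ → ι, ‖c • ∑ b, ζ (s b) + e‖ ^ 2
      = c ^ 2 * ‖∑ b, ζ (s b)‖ ^ 2 + 2 * c * ⟪∑ b, ζ (s b), e⟫ + ‖e‖ ^ 2 := by
    intro s
    rw [norm_add_sq_real, norm_smul, real_inner_smul_left, mul_pow, Real.norm_eq_abs, sq_abs]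
    ring
  simp_rw [hexpand, Finset.expect_add_distrib, ← Finset.mul_expect, hcross,
    expect_norm_sq_sum_comp hζ, Fintype.expect_const]
  rcases eq_or_ne (Fintype.card σ : ℝ) 0 with h | h
  · simp [c, h]
  · have hc : c * Fintype.card σ = 1 := inv_mul_cancel₀ h
    linear_combination c * (𝔼 j, ‖ζ j‖ ^ 2) * hc

theorem expect_norm_sub_mean_sq_le (a : ι → E) :
    𝔼 j, ‖a j - (Fintype.card ι : ℝ)⁻¹ • ∑ j', a j'‖ ^ 2 ≤ 𝔼 j, ‖a j‖ ^ 2 := by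
  set ā := (Fintype.card ι : ℝ)⁻¹ • ∑ j, a j
  have hinner : 𝔼 j, ⟪a j, ā⟫ = ‖ā‖ ^ 2 := by
    rw [Fintype.expect_eq_sum_div_card, ← sum_inner, div_eq_inv_mul, ← real_inner_smul_left,
      real_inner_self_eq_norm_sq]
  simp_rw [norm_sub_sq_real, Finset.expect_add_distrib, Finset.expect_sub_distrib,
    ← Finset.mul_expect, hinner, Fintype.expect_const]
  nlinarith [sq_nonneg ‖ā‖]

theorem expect_norm_sampleMean_sub_mean_add_sq_le [Nonempty σ] (a : ι → E) (e : E) :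
    𝔼 s : σ → ι, ‖(Fintype.card σ : ℝ)⁻¹ • ∑ b, a (s b)
        - (Fintype.card ι : ℝ)⁻¹ • ∑ j, a j + e‖ ^ 2
      ≤ (Fintype.card σ : ℝ)⁻¹ * 𝔼 j, ‖a j‖ ^ 2 + ‖e‖ ^ 2 := by
  set ā := (Fintype.card ι : ℝ)⁻¹ • ∑ j, a j
  have hσ : (Fintype.card σ : ℝ) ≠ 0 := Nat.cast_ne_zero.mpr Fintype.card_ne_zero
  have hι : (Fintype.card ι : ℝ) ≠ 0 := Nat.cast_ne_zero.mpr Fintype.card_ne_zero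
  have hsum : ∑ j, (a j - ā) = 0 := by
    rw [sum_sub_distrib, sum_const, card_univ, ← Nat.cast_smul_eq_nsmul ℝ, smul_inv_smul₀ hι,
      sub_self]
  have hcenter : ∀ s : σ → ι, (Fintype.card σ : ℝ)⁻¹ • ∑ b, a (s b) - ā
      = (Fintype.card σ : ℝ)⁻¹ • ∑ b, (a (s b) - ā) := by
    intro s
    rw [sum_sub_distrib, sum_const, card_univ, smul_sub, ← Nat.cast_smul_eq_nsmul ℝ,
      inv_smul_smul₀ hσ]
  simp_rw [hcenter, expect_norm_smul_sum_comp_add_sq hsum]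
  gcongr _ * ?_ + _
  exact expect_norm_sub_mean_sq_le a

end SampleMean

section UniformSampling

variable {Ω : Type*} [MeasurableSpace Ω] {μ : Measure Ω}

theorem integral_comp_eq_expect_of_iIndepFun_uniform [IsProbabilityMeasure μ] {κ β : Type*}
    [Fintype κ] [DecidableEq κ] [Fintype β] [MeasurableSpace β] [MeasurableSingletonClass β]
    {X : κ → Ω → β} (hmeas : ∀ k, Measurable (X k))
    (hunif : ∀ k b, μ {ω | X k ω = b} = (Fintype.card β : ℝ≥0∞)⁻¹) (hind : iIndepFun X μ)
    (K : (κ → β) → ℝ) :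
    ∫ ω, K (fun k => X k ω) ∂μ = 𝔼 p, K p := by
  have hpoint : ∀ p : κ → β, (Measure.pi fun k => μ.map (X k)).real {p}
      = ((Fintype.card β : ℝ)⁻¹) ^ Fintype.card κ := by
    intro p
    rw [measureReal_def, ← Set.univ_pi_singleton, Measure.pi_pi]
    simp_rw [Measure.map_apply (hmeas _) (measurableSet_singleton _)]
    simp [Set.preimage, hunif, ENNReal.toReal_pow]
  rw [← integral_map (aemeasurable_pi_lambda _ fun k => (hmeas k).aemeasurable)
      (Measurable.of_discrete.aestronglyMeasurable),
    hind.map_fun_eq_pi_map fun k => (hmeas k).aemeasurable, integral_fintype .of_finite,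
    Fintype.expect_eq_sum_div_card]
  simp_rw [hpoint, smul_eq_mul, ← Finset.mul_sum]
  simp [div_eq_inv_mul]

theorem integrable_comp_of_finite [IsFiniteMeasure μ] {κ β : Type*} [Fintype κ] [Finite β]
    [MeasurableSpace β] [MeasurableSingletonClass β] {X : κ → Ω → β}
    (hmeas : ∀ k, Measurable (X k)) (K : (κ → β) → ℝ) :
    Integrable (fun ω => K fun k => X k ω) μ :=
  Integrable.of_finite.comp_measurable (measurable_pi_lambda _ hmeas)

theorem integral_comp_history_fresh_le [IsProbabilityMeasure μ] {τ β : Type*} [Fintype τ]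
    [DecidableEq τ] [Fintype β] [MeasurableSpace β] [MeasurableSingletonClass β]
    {J : ℕ → τ → Ω → β} (hmeas : ∀ t z, Measurable (J t z))
    (hunif : ∀ t z b, μ {ω | J t z ω = b} = (Fintype.card β : ℝ≥0∞)⁻¹)
    (hind : iIndepFun (fun p : ℕ × τ => J p.1 p.2) μ) {r s : ℕ} (hrs : r < s)
    {F : (Fin (r + 1) → τ → β) → (τ → β) → ℝ} {H : (Fin (r + 1) → τ → β) → ℝ}
    (hFH : ∀ h, 𝔼 c, F h c ≤ H h) :
    ∫ ω, F (fun t z => J t z ω) (fun z => J s z ω) ∂μ ≤ ∫ ω, H (fun t z => J t z ω) ∂μ := by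
  let e₁ : Fin (r + 1) × τ → ℕ × τ := fun p => (p.1, p.2)
  have he₁ : e₁.Injective := fun p p' h =>
    Prod.ext (Fin.ext (congrArg Prod.fst h :)) (congrArg Prod.snd h :)
  have he : (Sum.elim e₁ fun z => (s, z)).Injective :=
    he₁.sumElim (fun z z' h => congrArg Prod.snd h) fun p z h => by
      have := congrArg Prod.fst h
      have := p.1.isLt
      simp only [e₁] at *
      omega
  calc ∫ ω, F (fun t z => J t z ω) (fun z => J s z ω) ∂μ
      = 𝔼 p : (Fin (r + 1) × τ) ⊕ τ → β, F (fun t z => p (.inl (t, z))) (fun z => p (.inr z)) :=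
        integral_comp_eq_expect_of_iIndepFun_uniform (fun _ => hmeas _ _) (fun _ => hunif _ _)
          (hind.precomp he) fun p => F (fun t z => p (.inl (t, z))) fun z => p (.inr z)
    _ = 𝔼 p₁ : Fin (r + 1) × τ → β, 𝔼 c, F (Function.curry p₁) c :=
        expect_sum_arrow fun p₁ c => F (Function.curry p₁) c
    _ ≤ 𝔼 p₁ : Fin (r + 1) × τ → β, H (Function.curry p₁) :=
        Finset.expect_le_expect fun p₁ _ => hFH _
    _ = ∫ ω, H (fun t z => J t z ω) ∂μ :=
        (integral_comp_eq_expect_of_iIndepFun_uniform (fun _ => hmeas _ _) (fun _ => hunif _ _)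
          (hind.precomp he₁) fun p => H (Function.curry p)).symm

end UniformSampling

theorem exists_eq_comp_history {Ω α β : Type*} {Z : ℕ → Ω → α} {ξ : ℕ → Ω → β} {z₀ : α}
    (step : ℕ → α → β → α) (h0 : ∀ ω, Z 0 ω = z₀)
    (hstep : ∀ r ω, Z (r + 1) ω = step r (Z r ω) (ξ (r + 1) ω)) (r : ℕ) :
    ∃ Φ : (Fin (r + 1) → β) → α, ∀ ω, Z r ω = Φ fun t => ξ t ω := by
  induction r with
  | zero => exact ⟨fun _ => z₀, h0⟩
  | succ r ih =>
    obtain ⟨Φ, hΦ⟩ := ih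
    exact ⟨fun h => step r (Φ fun t => h t.castSucc) (h (Fin.last _)),
      fun ω => by rw [hstep, hΦ]; rfl⟩

theorem le_mul_sum_Icc_add_of_succ_le {q : ℕ} {e D : ℕ → ℝ} {a : ℝ} (ha : 0 ≤ a)
    (hD : ∀ t, 0 ≤ D t) (hstep : ∀ r, ¬ q ∣ r + 1 → e (r + 1) ≤ a * D r + e r) (r : ℕ) :
    e r ≤ a * ∑ t ∈ Icc (r / q * q) r, D t + e (r / q * q) := by
  have hIco : ∀ r, e r ≤ a * ∑ t ∈ Ico (r / q * q) r, D t + e (r / q * q) := by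
    intro r
    induction r with
    | zero => simp
    | succ r ih =>
      by_cases h : q ∣ r + 1
      · simp [Nat.div_mul_cancel h]
      · rw [Nat.succ_div_of_not_dvd h, sum_Ico_succ_top (Nat.div_mul_le_self r q)]
        linarith [hstep r h]
  calc e r ≤ a * ∑ t ∈ Ico (r / q * q) r, D t + e (r / q * q) := hIco r
    _ ≤ a * ∑ t ∈ Icc (r / q * q) r, D t + e (r / q * q) := by
      gcongr
      · exact fun t _ _ => hD t
      · exact Ico_subset_Icc_self


theorem gradient_fLoc {m d n : ℕ} {f : Fin m → Fin n → Vec d → ℝ}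
    (hdiff : ∀ i j, Differentiable ℝ (f i j)) (i : Fin m) (w : Vec d) :
    gradient (fLoc f i) w = (n : ℝ)⁻¹ • ∑ j, gradient (f i j) w := by
  unfold fLoc gradient
  rw [fderiv_const_mul (DifferentiableAt.fun_sum fun j _ => (hdiff i j).differentiableAt),
    fderiv_fun_sum fun j _ => (hdiff i j).differentiableAt]
  simp [map_sum]

/-- `c (b, i)` is the `b`-th index drawn by node `i`. -/
def spiderEst {m d n S : ℕ} (f : Fin m → Fin n → Vec d → ℝ) (c : Fin S × Fin m → Fin n)
    (x x' v : Stack m d) : Stack m d :=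
  WithLp.toLp 2 fun i =>
    (S : ℝ)⁻¹ • ∑ b, (gradient (f i (c (b, i))) (x i) - gradient (f i (c (b, i))) (x' i)) + v i

theorem expect_norm_spiderEst_sub_sq_le {m d n S : ℕ} [NeZero n] [NeZero S]
    {f : Fin m → Fin n → Vec d → ℝ} (hdiff : ∀ i j, Differentiable ℝ (f i j)) {L : ℝ}
    (hlip : ∀ i j (u u' : Vec d), ‖gradient (f i j) u - gradient (f i j) u'‖ ≤ L * ‖u - u'‖)
    (x x' v : Stack m d) :
    𝔼 c : Fin S × Fin m → Fin n, ‖spiderEst f c x x' v - Gmap f x‖ ^ 2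
      ≤ L ^ 2 / S * ‖x - x'‖ ^ 2 + ‖v - Gmap f x'‖ ^ 2 := by
  let a : Fin m → Fin n → Vec d := fun i j => gradient (f i j) (x i) - gradient (f i j) (x' i)
  have hblock : ∀ (c : Fin S × Fin m → Fin n) i, (spiderEst f c x x' v - Gmap f x) i
      = (Fintype.card (Fin S) : ℝ)⁻¹ • ∑ b, a i (c (b, i))
        - (Fintype.card (Fin n) : ℝ)⁻¹ • ∑ j, a i j + (v - Gmap f x') i := by
    intro c i
    simp only [spiderEst, Gmap, PiLp.sub_apply, gradient_fLoc hdiff, Fintype.card_fin, a,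
      smul_sub, sum_sub_distrib]
    abel
  have hnode : ∀ i, 𝔼 s : Fin S → Fin n, ‖(Fintype.card (Fin S) : ℝ)⁻¹ • ∑ b, a i (s b)
        - (Fintype.card (Fin n) : ℝ)⁻¹ • ∑ j, a i j + (v - Gmap f x') i‖ ^ 2
      ≤ L ^ 2 / S * ‖x i - x' i‖ ^ 2 + ‖(v - Gmap f x') i‖ ^ 2 := by
    intro i
    have hlip_sq : 𝔼 j, ‖a i j‖ ^ 2 ≤ L ^ 2 * ‖x i - x' i‖ ^ 2 := by
      calc 𝔼 j, ‖a i j‖ ^ 2 ≤ 𝔼 _j : Fin n, (L * ‖x i - x' i‖) ^ 2 :=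
            expect_le_expect fun j _ => pow_le_pow_left₀ (norm_nonneg _) (hlip i j _ _) 2
        _ = L ^ 2 * ‖x i - x' i‖ ^ 2 := by rw [Fintype.expect_const, mul_pow]
    refine (expect_norm_sampleMean_sub_mean_add_sq_le (a i) _).trans ?_
    rw [Fintype.card_fin, div_eq_inv_mul, mul_assoc]
    gcongr
  calc 𝔼 c : Fin S × Fin m → Fin n, ‖spiderEst f c x x' v - Gmap f x‖ ^ 2
      = ∑ i, 𝔼 c : Fin S × Fin m → Fin n, ‖(spiderEst f c x x' v - Gmap f x) i‖ ^ 2 := by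
        simp_rw [PiLp.norm_sq_eq_of_L2, Finset.expect_sum_comm]
    _ = ∑ i, 𝔼 s : Fin S → Fin n, ‖(Fintype.card (Fin S) : ℝ)⁻¹ • ∑ b, a i (s b)
          - (Fintype.card (Fin n) : ℝ)⁻¹ • ∑ j, a i j + (v - Gmap f x') i‖ ^ 2 := by
        simp_rw [hblock]
        exact sum_congr rfl fun i _ => expect_comp_slice i fun s =>
          ‖(Fintype.card (Fin S) : ℝ)⁻¹ • ∑ b, a i (s b)
            - (Fintype.card (Fin n) : ℝ)⁻¹ • ∑ j, a i j + (v - Gmap f x') i‖ ^ 2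
    _ ≤ ∑ i, (L ^ 2 / S * ‖x i - x' i‖ ^ 2 + ‖(v - Gmap f x') i‖ ^ 2) :=
        sum_le_sum fun i _ => hnode i
    _ = L ^ 2 / S * ‖x - x'‖ ^ 2 + ‖v - Gmap f x'‖ ^ 2 := by
        simp_rw [PiLp.norm_sq_eq_of_L2, sum_add_distrib, mul_sum, PiLp.sub_apply]

theorem integral_norm_spiderEst_sub_sq_le {m d n S : ℕ} [NeZero n] [NeZero S]
    {f : Fin m → Fin n → Vec d → ℝ} (hdiff : ∀ i j, Differentiable ℝ (f i j)) {L : ℝ}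
    (hlip : ∀ i j (u u' : Vec d), ‖gradient (f i j) u - gradient (f i j) u'‖ ≤ L * ‖u - u'‖)
    {Ω : Type*} [MeasurableSpace Ω] {μ : Measure Ω} [IsProbabilityMeasure μ]
    {J : ℕ → Fin S → Fin m → Ω → Fin n} (hJmeas : ∀ r b i, Measurable (J r b i))
    (hJunif : ∀ r b i j, μ {ω | J r b i ω = j} = (n : ℝ≥0∞)⁻¹)
    (hJindep : iIndepFun (fun p : ℕ × Fin S × Fin m => J p.1 p.2.1 p.2.2) μ)
    {x v : ℕ → Ω → Stack m d} {r : ℕ}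
    (hpast : ∃ Ψ : (Fin (r + 1) → Fin S × Fin m → Fin n) → Stack m d × Stack m d × Stack m d,
      ∀ ω, (x r ω, v r ω, x (r + 1) ω) = Ψ fun t z => J t z.1 z.2 ω)
    (hv : ∀ ω, v (r + 1) ω
      = spiderEst f (fun z => J (r + 1) z.1 z.2 ω) (x (r + 1) ω) (x r ω) (v r ω)) :
    ∫ ω, ‖v (r + 1) ω - Gmap f (x (r + 1) ω)‖ ^ 2 ∂μ
      ≤ L ^ 2 / S * ∫ ω, ‖x (r + 1) ω - x r ω‖ ^ 2 ∂μ
        + ∫ ω, ‖v r ω - Gmap f (x r ω)‖ ^ 2 ∂μ := by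
  obtain ⟨Ψ, hΨ⟩ := hpast
  have hmeas : ∀ t (z : Fin S × Fin m), Measurable (J t z.1 z.2) := fun t z => hJmeas _ _ _
  have hunif : ∀ t (z : Fin S × Fin m) k,
      μ {ω | J t z.1 z.2 ω = k} = (Fintype.card (Fin n) : ℝ≥0∞)⁻¹ := fun t z k => by
    rw [Fintype.card_fin]
    exact hJunif _ _ _ _
  have hint : ∀ K : (Fin (r + 1) → Fin S × Fin m → Fin n) → ℝ,
      Integrable (fun ω => K fun t z => J t z.1 z.2 ω) μ :=
    integrable_comp_of_finite fun t => measurable_pi_lambda _ (hmeas t)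
  let newError : (Fin (r + 1) → Fin S × Fin m → Fin n) → (Fin S × Fin m → Fin n) → ℝ :=
    fun h c => ‖spiderEst f c (Ψ h).2.2 (Ψ h).1 (Ψ h).2.1 - Gmap f (Ψ h).2.2‖ ^ 2
  let step : (Fin (r + 1) → Fin S × Fin m → Fin n) → ℝ := fun h => ‖(Ψ h).2.2 - (Ψ h).1‖ ^ 2
  let error : (Fin (r + 1) → Fin S × Fin m → Fin n) → ℝ :=
    fun h => ‖(Ψ h).2.1 - Gmap f (Ψ h).1‖ ^ 2
  calc ∫ ω, ‖v (r + 1) ω - Gmap f (x (r + 1) ω)‖ ^ 2 ∂μ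
      = ∫ ω, newError (fun t z => J t z.1 z.2 ω) (fun z => J (r + 1) z.1 z.2 ω) ∂μ := by
        simp only [newError, hv, ← hΨ]
    _ ≤ ∫ ω, L ^ 2 / S * step (fun t z => J t z.1 z.2 ω) + error (fun t z => J t z.1 z.2 ω) ∂μ :=
        integral_comp_history_fresh_le (J := fun t (z : Fin S × Fin m) => J t z.1 z.2) hmeas
          hunif hJindep r.lt_succ_self (H := fun h => L ^ 2 / S * step h + error h)
          fun h => expect_norm_spiderEst_sub_sq_le hdiff hlip _ _ _
    _ = L ^ 2 / S * ∫ ω, ‖x (r + 1) ω - x r ω‖ ^ 2 ∂μ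
        + ∫ ω, ‖v r ω - Gmap f (x r ω)‖ ^ 2 ∂μ := by
        rw [integral_add ((hint step).const_mul _) (hint error), integral_const_mul]
        simp only [step, error, ← hΨ]

def dgetStep {m d n : ℕ} (q S : ℕ) (α : ℝ) (f : Fin m → Fin n → Vec d → ℝ)
    (W : Matrix (Fin m) (Fin m) ℝ) (r : ℕ) (s : Stack m d × Stack m d × Stack m d)
    (c : Fin S × Fin m → Fin n) : Stack m d × Stack m d × Stack m d :=
  let x := Wact W s.1 - α • s.2.2
  let v := if q ∣ r + 1 then Gmap f x else spiderEst f c x s.1 s.2.1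
  (x, v, Wact W s.2.2 + v - s.2.1)

/-- The paper's `(n_r − 1) q`, with `n_r = ⌊r/q⌋ + 1`, is `r / q * q`. -/
theorem stmt9_general
    (m d n q S2 : ℕ) (hn : 0 < n) (hS2 : 0 < S2)
    (L α : ℝ)
    (f : Fin m → Fin n → Vec d → ℝ)
    (hdiff : ∀ i j, Differentiable ℝ (f i j))
    (hlip : ∀ i j (u u' : Vec d),
      ‖gradient (f i j) u - gradient (f i j) u'‖ ≤ L * ‖u - u'‖)
    (W : Matrix (Fin m) (Fin m) ℝ)
    (Ω : Type) [MeasurableSpace Ω] (μ : Measure Ω) [IsProbabilityMeasure μ]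
    (J : ℕ → Fin S2 → Fin m → Ω → Fin n)
    (hJmeas : ∀ r b i, Measurable (J r b i))
    (hJunif : ∀ r b i j, μ {ω | J r b i ω = j} = (n : ENNReal)⁻¹)
    (hJindep : iIndepFun
      (fun p : ℕ × Fin S2 × Fin m => J p.1 p.2.1 p.2.2) μ)
    (x0 : Stack m d) (x v y : ℕ → Ω → Stack m d)
    (hx0 : ∀ ω, x 0 ω = x0)
    (hy0 : ∀ ω, y 0 ω = v 0 ω)
    (hxrec : ∀ r ω, x (r + 1) ω = Wact W (x r ω) - α • y r ω)
    (hvfull : ∀ r, q ∣ r → ∀ ω, v r ω = Gmap f (x r ω))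
    (hvest : ∀ r, ¬ q ∣ (r + 1) → ∀ ω i, v (r + 1) ω i =
      (S2 : ℝ)⁻¹ • ∑ b, (gradient (f i (J (r + 1) b i ω)) (x (r + 1) ω i)
        - gradient (f i (J (r + 1) b i ω)) (x r ω i)) + v r ω i)
    (hyrec : ∀ r ω, y (r + 1) ω = Wact W (y r ω) + v (r + 1) ω - v r ω)
    :
    ∀ r : ℕ,
      (∫ ω, ‖v r ω - Gmap f (x r ω)‖ ^ 2 ∂μ) ≤
        L ^ 2 / (S2 : ℝ) *
            ∑ t ∈ Finset.Icc (r / q * q) r, ∫ ω, ‖x (t + 1) ω - x t ω‖ ^ 2 ∂μ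
        + ∫ ω, ‖v (r / q * q) ω - Gmap f (x (r / q * q) ω)‖ ^ 2 ∂μ := by
  have : NeZero n := ⟨hn.ne'⟩
  have : NeZero S2 := ⟨hS2.ne'⟩
  have hspider : ∀ r, ¬ q ∣ r + 1 → ∀ ω, v (r + 1) ω
      = spiderEst f (fun z => J (r + 1) z.1 z.2 ω) (x (r + 1) ω) (x r ω) (v r ω) :=
    fun r hr ω => PiLp.ext (hvest r hr ω)
  have hhistory := exists_eq_comp_history (Z := fun r ω => (x r ω, v r ω, y r ω))
    (ξ := fun t ω z => J t z.1 z.2 ω) (z₀ := (x0, Gmap f x0, Gmap f x0)) (dgetStep q S2 α f W)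
    (fun ω => by simp only [hy0, hvfull 0 (dvd_zero q) ω, hx0]) fun r ω => by
      by_cases hr : q ∣ r + 1
      · simp only [dgetStep, if_pos hr]
        rw [← hxrec, ← hvfull (r + 1) hr, ← hyrec]
      · simp only [dgetStep, if_neg hr]
        rw [← hxrec, ← hspider r hr, ← hyrec]
  refine le_mul_sum_Icc_add_of_succ_le (e := fun r => ∫ ω, ‖v r ω - Gmap f (x r ω)‖ ^ 2 ∂μ)
    (D := fun t => ∫ ω, ‖x (t + 1) ω - x t ω‖ ^ 2 ∂μ) (by positivity)
    (fun t => integral_nonneg fun ω => sq_nonneg _) fun r hr => ?_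
  obtain ⟨Φ, hΦ⟩ := hhistory r
  exact integral_norm_spiderEst_sub_sq_le hdiff hlip hJmeas hJunif hJindep
    ⟨fun h => ((Φ h).1, (Φ h).2.1, Wact W (Φ h).1 - α • (Φ h).2.2),
      fun ω => by simp only [hxrec, ← hΦ]⟩ (hspider r hr)

/-- Lemma 1, part 2: bound on the local gradient-estimation variance over the
current inner loop.  Here `n_r = ⌊r/q⌋ + 1`, so `(n_r − 1)q = (r/q)·q`, and every iteration
`r` satisfies `(n_r − 1)q ≤ r ≤ n_r q − 1`. -/
theorem stmt9
    (m d n q S2 : ℕ) (hm : 0 < m) (hn : 0 < n) (hq : 1 ≤ q) (hS2 : 0 < S2)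
    (L η α : ℝ) (hL : 0 ≤ L) (hη0 : 0 ≤ η) (hη1 : η < 1) (hα : 0 < α)
    (f : Fin m → Fin n → Vec d → ℝ)
    (hdiff : ∀ i j, Differentiable ℝ (f i j))
    (hlip : ∀ i j (u u' : Vec d),
      ‖gradient (f i j) u - gradient (f i j) u'‖ ≤ L * ‖u - u'‖)
    (W : Matrix (Fin m) (Fin m) ℝ) (hWsymm : W.IsSymm)
    (hW1 : W.mulVec (fun _ => (1 : ℝ)) = fun _ => (1 : ℝ))
    (hWcontract : ∀ u : Vec m, (∑ k, u k) = 0 → ‖mulVecE W u‖ ≤ η * ‖u‖)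
    (Ω : Type) [MeasurableSpace Ω] (μ : Measure Ω) [IsProbabilityMeasure μ]
    (J : ℕ → Fin S2 → Fin m → Ω → Fin n)
    (hJmeas : ∀ r b i, Measurable (J r b i))
    (hJunif : ∀ r b i j, μ {ω | J r b i ω = j} = (n : ENNReal)⁻¹)
    (hJindep : iIndepFun
      (fun p : ℕ × Fin S2 × Fin m => J p.1 p.2.1 p.2.2) μ)
    (x0 : Stack m d) (x v y : ℕ → Ω → Stack m d)
    (hx0 : ∀ ω, x 0 ω = x0)
    (hy0 : ∀ ω, y 0 ω = v 0 ω)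
    (hxrec : ∀ r ω, x (r + 1) ω = Wact W (x r ω) - α • y r ω)
    (hvfull : ∀ r, q ∣ r → ∀ ω, v r ω = Gmap f (x r ω))
    (hvest : ∀ r, ¬ q ∣ (r + 1) → ∀ ω i, v (r + 1) ω i =
      (S2 : ℝ)⁻¹ • ∑ b, (gradient (f i (J (r + 1) b i ω)) (x (r + 1) ω i)
        - gradient (f i (J (r + 1) b i ω)) (x r ω i)) + v r ω i)
    (hyrec : ∀ r ω, y (r + 1) ω = Wact W (y r ω) + v (r + 1) ω - v r ω)
    :
    ∀ r : ℕ,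
      (∫ ω, ‖v r ω - Gmap f (x r ω)‖ ^ 2 ∂μ) ≤
        L ^ 2 / (S2 : ℝ) *
            ∑ t ∈ Finset.Icc (r / q * q) r, ∫ ω, ‖x (t + 1) ω - x t ω‖ ^ 2 ∂μ
        + ∫ ω, ‖v (r / q * q) ω - Gmap f (x (r / q * q) ω)‖ ^ 2 ∂μ :=
  stmt9_general m d n q S2 hn hS2 L α f hdiff hlip W Ω μ J hJmeas hJunif hJindep x0 x v y hx0 hy0
    hxrec hvfull hvest hyrec
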